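/- arXiv:2405.08291 — 5 statements merged into one kernel-verified Lean document; each statement's English description precedes it below -/
import Mathlib

section
/- Let H₄⁽⁻⁾ be the Lie algebra over a field k of characteristic ≠ 2 with basis 1, g, e, f and brackets [1,·] = 0, [g,e] = 2e, [g,f] = −2f, [e,f] = 0. If L is a two-dimensional ideal of H₄⁽⁻⁾ different from K = k·e + k·f, then L equals k·1 + k·e or k·1 + k·f. -/
/-!
Bracketing with `e` and `f` multiplies them by `∓2` times the `g`-coordinate, so an ideal with an
element of nonzero `g`-coordinate contains `K`, and then equals `K` for dimension reasons.
Otherwise the ideal lies in `k·1 + K`. Since `ad g` acts on `e` and `f` with the eigenvalues `2 ≠ -2`,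
the ideal contains the `e`- and `f`-components of each of its elements; as it cannot contain both
`e` and `f`, all its elements lie in `k·1 + k·e` or all in `k·1 + k·f`, with equality by dimension.
-/

open Module Submodule

theorem Module.Basis.finrank_span_pair {R M ι : Type*} [Ring R] [StrongRankCondition R]
    [AddCommGroup M] [Module R M] (b : Basis ι R M) {i j : ι} (hij : i ≠ j) :
    finrank R (span R ({b i, b j} : Set M)) = 2 := by
  classical
  have := nontrivial_of_invariantBasisNumber R
  rw [← Set.image_pair, finrank_span_set_eq_card (b.linearIndependent.linearIndepOn _).id_image,
    Set.toFinset_image, Set.toFinset_insert, Set.toFinset_singleton,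
    Finset.card_image_of_injective _ b.injective, Finset.card_pair hij]

theorem Module.Basis.mem_span_pair_of_repr_eq_zero {R M ι : Type*} [Semiring R]
    [AddCommMonoid M] [Module R M] (b : Basis ι R M) {i j : ι} {y : M}
    (h : ∀ l, l ≠ i → l ≠ j → b.repr y l = 0) : y ∈ span R ({b i, b j} : Set M) := by
  rw [← Set.image_pair, b.mem_span_image]
  intro l hl
  by_contra hij
  simp only [Set.mem_insert_iff, Set.mem_singleton_iff, not_or] at hij
  exact Finsupp.mem_support_iff.mp hl (h l hij.1 hij.2)

section PairSpan

variable {K M ι : Type*} [DivisionRing K] [AddCommGroup M] [Module K M] (b : Basis ι K M)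
  {i j : ι} {N : Submodule K M}

theorem Module.Basis.span_pair_eq_of_mem (hij : i ≠ j) (hN : finrank K N = 2) (hi : b i ∈ N)
    (hj : b j ∈ N) : span K ({b i, b j} : Set M) = N :=
  have : FiniteDimensional K N := .of_finrank_pos (by omega)
  eq_of_le_of_finrank_eq (span_le.mpr (Set.insert_subset hi (Set.singleton_subset_iff.mpr hj)))
    (by rw [hN, b.finrank_span_pair hij])

theorem Module.Basis.eq_span_pair_of_repr_eq_zero (hij : i ≠ j) (hN : finrank K N = 2)
    (h : ∀ y ∈ N, ∀ l, l ≠ i → l ≠ j → b.repr y l = 0) : N = span K ({b i, b j} : Set M) :=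
  have : FiniteDimensional K (span K ({b i, b j} : Set M)) :=
    .of_finrank_pos (by rw [b.finrank_span_pair hij]; omega)
  eq_of_le_of_finrank_eq (fun y hy => b.mem_span_pair_of_repr_eq_zero (h y hy))
    (by rw [hN, b.finrank_span_pair hij])

end PairSpan

theorem Submodule.mem_and_mem_of_add_mem_of_apply_eq_smul {K M : Type*} [Field K]
    [AddCommGroup M] [Module K M] (N : Submodule K M) (φ : M →ₗ[K] M) (hN : ∀ y ∈ N, φ y ∈ N)
    {a c : K} (hac : a ≠ c) {u w : M} (hu : φ u = a • u) (hw : φ w = c • w) (h : u + w ∈ N) :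
    u ∈ N ∧ w ∈ N := by
  have hφ : φ (u + w) - c • (u + w) = (a - c) • u := by
    rw [map_add, hu, hw]; module
  have hu_mem : u ∈ N := by
    rw [← N.smul_mem_iff (sub_ne_zero.mpr hac), ← hφ]
    exact N.sub_mem (hN _ h) (N.smul_mem _ h)
  exact ⟨hu_mem, by simpa using N.sub_mem h hu_mem⟩

theorem Submodule.mem_of_lie_eq_smul {K L : Type*} [Field K] [LieRing L] [LieAlgebra K L]
    {N : Submodule K L} (hN : ∀ x : L, ∀ y ∈ N, ⁅x, y⁆ ∈ N) {x y v : L} {c : K} (hy : y ∈ N)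
    (hc : c ≠ 0) (h : ⁅x, y⁆ = c • v) : v ∈ N :=
  (N.smul_mem_iff hc).mp (h ▸ hN x y hy)

namespace H4Minus

section CommRing

variable {k L : Type*} [CommRing k] [LieRing L] [LieAlgebra k L]

structure IsStandardBasis (b : Basis (Fin 4) k L) : Prop where
  lie_one_g : ⁅b 0, b 1⁆ = 0
  lie_one_e : ⁅b 0, b 2⁆ = 0
  lie_one_f : ⁅b 0, b 3⁆ = 0
  lie_g_e : ⁅b 1, b 2⁆ = (2 : k) • b 2
  lie_g_f : ⁅b 1, b 3⁆ = -((2 : k) • b 3)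
  lie_e_f : ⁅b 2, b 3⁆ = 0

namespace IsStandardBasis

variable {b : Basis (Fin 4) k L}

theorem lie_e_eq (hb : IsStandardBasis b) (y : L) : ⁅b 2, y⁆ = -(2 * b.repr y 1) • b 2 := by
  conv_lhs => rw [← b.sum_repr y]
  simp only [Fin.sum_univ_four, lie_add, lie_smul, ← lie_skew (b 2) (b 0),
    ← lie_skew (b 2) (b 1), hb.lie_one_e, hb.lie_g_e, hb.lie_e_f, lie_self]
  module

theorem lie_f_eq (hb : IsStandardBasis b) (y : L) : ⁅b 3, y⁆ = (2 * b.repr y 1) • b 3 := by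
  conv_lhs => rw [← b.sum_repr y]
  simp only [Fin.sum_univ_four, lie_add, lie_smul, ← lie_skew (b 3) (b 0),
    ← lie_skew (b 3) (b 1), ← lie_skew (b 3) (b 2), hb.lie_one_f, hb.lie_g_f, hb.lie_e_f,
    lie_self]
  module

theorem lie_g_eq (hb : IsStandardBasis b) (y : L) :
    ⁅b 1, y⁆ = (2 * b.repr y 2) • b 2 + (-(2 * b.repr y 3)) • b 3 := by
  conv_lhs => rw [← b.sum_repr y]
  simp only [Fin.sum_univ_four, lie_add, lie_smul, ← lie_skew (b 1) (b 0), hb.lie_one_g,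
    hb.lie_g_e, hb.lie_g_f, lie_self]
  module

theorem ad_g_smul_e (hb : IsStandardBasis b) (c : k) :
    LieAlgebra.ad k L (b 1) (c • b 2) = (2 : k) • c • b 2 := by
  rw [LieAlgebra.ad_apply, lie_smul, hb.lie_g_e, smul_comm]

theorem ad_g_smul_f (hb : IsStandardBasis b) (c : k) :
    LieAlgebra.ad k L (b 1) (c • b 3) = (-2 : k) • c • b 3 := by
  rw [LieAlgebra.ad_apply, lie_smul, hb.lie_g_f]
  module

end IsStandardBasis

end CommRing

section Field

variable {k L : Type*} [Field k] [LieRing L] [LieAlgebra k L]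

theorem two_ne_neg_two (h2 : (2 : k) ≠ 0) : (2 : k) ≠ -2 :=
  fun h => h2 (mul_self_eq_zero.mp (by linear_combination h))

namespace IsStandardBasis

variable {b : Basis (Fin 4) k L} {N : Submodule k L} {y : L}

theorem repr_one_eq_zero (hb : IsStandardBasis b) (h2 : (2 : k) ≠ 0)
    (hN : ∀ x : L, ∀ y ∈ N, ⁅x, y⁆ ∈ N) (hK : ¬(b 2 ∈ N ∧ b 3 ∈ N)) (hy : y ∈ N) :
    b.repr y 1 = 0 := by
  by_contra h
  exact hK ⟨mem_of_lie_eq_smul hN hy (by simp [h2, h]) (hb.lie_e_eq y),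
    mem_of_lie_eq_smul hN hy (by simp [h2, h]) (hb.lie_f_eq y)⟩

theorem smul_e_mem_and_smul_f_mem (hb : IsStandardBasis b) (h2 : (2 : k) ≠ 0)
    (hN : ∀ x : L, ∀ y ∈ N, ⁅x, y⁆ ∈ N) (hy : y ∈ N) :
    (2 * b.repr y 2) • b 2 ∈ N ∧ (-(2 * b.repr y 3)) • b 3 ∈ N :=
  N.mem_and_mem_of_add_mem_of_apply_eq_smul _ (hN (b 1)) (two_ne_neg_two h2)
    (hb.ad_g_smul_e _) (hb.ad_g_smul_f _) (hb.lie_g_eq y ▸ hN (b 1) y hy)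

theorem repr_two_eq_zero (hb : IsStandardBasis b) (h2 : (2 : k) ≠ 0)
    (hN : ∀ x : L, ∀ y ∈ N, ⁅x, y⁆ ∈ N) (he : b 2 ∉ N) (hy : y ∈ N) : b.repr y 2 = 0 := by
  by_contra h
  exact he ((N.smul_mem_iff (mul_ne_zero h2 h)).mp (hb.smul_e_mem_and_smul_f_mem h2 hN hy).1)

theorem repr_three_eq_zero (hb : IsStandardBasis b) (h2 : (2 : k) ≠ 0)
    (hN : ∀ x : L, ∀ y ∈ N, ⁅x, y⁆ ∈ N) (hf : b 3 ∉ N) (hy : y ∈ N) : b.repr y 3 = 0 := by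
  by_contra h
  exact hf ((N.smul_mem_iff (neg_ne_zero.mpr (mul_ne_zero h2 h))).mp
    (hb.smul_e_mem_and_smul_f_mem h2 hN hy).2)

end IsStandardBasis

end Field

end H4Minus

open H4Minus in
/-- Any two-dimensional ideal of `H₄⁽⁻⁾` different from `K = span{e, f}` equals
`span{1, e}` or `span{1, f}`. -/
theorem two_dim_ideals {k : Type*} [Field k] (h2 : (2 : k) ≠ 0)
    {L : Type*} [LieRing L] [LieAlgebra k L] (b : Module.Basis (Fin 4) k L)
    (h1g : ⁅b 0, b 1⁆ = 0) (h1e : ⁅b 0, b 2⁆ = 0) (h1f : ⁅b 0, b 3⁆ = 0)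
    (hge : ⁅b 1, b 2⁆ = (2 : k) • b 2) (hgf : ⁅b 1, b 3⁆ = -((2 : k) • b 3))
    (hef : ⁅b 2, b 3⁆ = 0)
    (N : Submodule k L) (hideal : ∀ x : L, ∀ y ∈ N, ⁅x, y⁆ ∈ N)
    (hdim : Module.finrank k N = 2)
    (hK : N ≠ Submodule.span k ({b 2, b 3} : Set L)) :
    N = Submodule.span k ({b 0, b 2} : Set L) ∨
      N = Submodule.span k ({b 0, b 3} : Set L) := by
  have hb : IsStandardBasis b := ⟨h1g, h1e, h1f, hge, hgf, hef⟩
  have not_both : ¬(b 2 ∈ N ∧ b 3 ∈ N) := fun ⟨he, hf⟩ =>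
    hK (b.span_pair_eq_of_mem (by decide) hdim he hf).symm
  by_cases hf : b 3 ∈ N
  · have he : b 2 ∉ N := fun he => not_both ⟨he, hf⟩
    refine .inr (b.eq_span_pair_of_repr_eq_zero (by decide) hdim fun y hy l hl0 hl3 => ?_)
    obtain rfl | rfl : l = 1 ∨ l = 2 := by revert l; decide
    exacts [hb.repr_one_eq_zero h2 hideal not_both hy, hb.repr_two_eq_zero h2 hideal he hy]
  · refine .inl (b.eq_span_pair_of_repr_eq_zero (by decide) hdim fun y hy l hl0 hl2 => ?_)
    obtain rfl | rfl : l = 1 ∨ l = 3 := by revert l; decide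
    exacts [hb.repr_one_eq_zero h2 hideal not_both hy, hb.repr_three_eq_zero h2 hideal hf hy]
end

section
/- Let H₄⁽⁻⁾ be the Lie algebra over a field k of characteristic ≠ 2 with basis 1, g, e, f and brackets [1,·] = 0, [g,e] = 2e, [g,f] = −2f, [e,f] = 0. If L is a three-dimensional ideal of H₄⁽⁻⁾, then either L = span(1, e, f) or L = span(α·1 + g, e, f) for some α ∈ k. -/
/-!
A three-dimensional ideal `N` of the four-dimensional algebra has one-dimensional, hence abelian,
quotient, so it contains every bracket; in particular it contains the eigenvectors `e` and `f` of
`ad g`, whose eigenvalues `±2` are invertible. What remains is a hyperplane through `span{e, f}`,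
which is cut out in `span{1, g}` by a single line: either the line of `1`, or that of `α·1 + g`.
-/

open Module

namespace Submodule

variable {k V : Type*} [Field k] [AddCommGroup V] [Module k V]

theorem exists_sub_smul_mem_of_finrank_quotient_eq_one {N : Submodule k V}
    (hN : finrank k (V ⧸ N) = 1) {v : V} (hv : v ∉ N) (x : V) : ∃ a : k, x - a • v ∈ N := by
  have hv' : N.mkQ v ≠ 0 := by simpa using hv
  obtain ⟨a, ha⟩ := (finrank_eq_one_iff_of_nonzero' _ hv').1 hN (N.mkQ x)
  refine ⟨a, ?_⟩
  rw [← Quotient.mk_eq_zero, Quotient.mk_sub, Quotient.mk_smul]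
  simpa [sub_eq_zero] using ha.symm

theorem eq_of_le_of_sup_span_singleton_eq_top [FiniteDimensional k V] {A N : Submodule k V}
    (hAN : A ≤ N) (hN : N ≠ ⊤) {v : V} (hAv : A ⊔ span k {v} = ⊤) : A = N := by
  refine eq_of_le_of_finrank_le hAN ?_
  have hv : finrank k (span k {v}) ≤ 1 := by
    simpa using finrank_span_le_card (R := k) ({v} : Set V)
  have hsup := finrank_add_le_finrank_add_finrank A (span k {v})
  rw [hAv, finrank_top] at hsup
  have := finrank_lt hN
  omega

end Submodule

section LieAlgebra

variable {k L : Type*} [Field k] [LieRing L] [LieAlgebra k L]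

theorem lie_mem_of_finrank_quotient_eq_one {N : Submodule k L}
    (hideal : ∀ x : L, ∀ y ∈ N, ⁅x, y⁆ ∈ N) (hN : finrank k (L ⧸ N) = 1) (x y : L) :
    ⁅x, y⁆ ∈ N := by
  obtain ⟨q, hq, -⟩ := finrank_eq_one_iff'.1 hN
  obtain ⟨v, rfl⟩ := N.mkQ_surjective q
  have hv : v ∉ N := by simpa using hq
  obtain ⟨a, ha⟩ := N.exists_sub_smul_mem_of_finrank_quotient_eq_one hN hv x
  obtain ⟨c, hc⟩ := N.exists_sub_smul_mem_of_finrank_quotient_eq_one hN hv y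
  have hxy : ⁅x, y⁆ = ⁅x - a • v, y⁆ + a • ⁅v, y - c • v⁆ := by
    simp only [sub_lie, lie_sub, smul_lie, lie_smul, lie_self]
    module
  rw [hxy, ← lie_skew]
  exact N.add_mem (N.neg_mem (hideal _ _ ha)) (N.smul_mem _ (hideal _ _ hc))

theorem mem_of_lie_eq_smul {N : Submodule k L} (hN : ∀ x y : L, ⁅x, y⁆ ∈ N) {x y : L} {c : k}
    (hc : c ≠ 0) (hxy : ⁅y, x⁆ = c • x) : x ∈ N := by
  have : x = c⁻¹ • ⁅y, x⁆ := by rw [hxy, smul_smul, inv_mul_cancel₀ hc, one_smul]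
  rw [this]
  exact N.smul_mem _ (hN y x)

end LieAlgebra

namespace Module.Basis

variable {k V : Type*} [Field k] [AddCommGroup V] [Module k V] (b : Basis (Fin 4) k V)
  {N : Submodule k V}

theorem span_eq_of_finrank_quotient_eq_one_of_mem (hQ : finrank k (V ⧸ N) = 1)
    (h0 : b 0 ∈ N) (h2 : b 2 ∈ N) (h3 : b 3 ∈ N) :
    Submodule.span k ({b 0, b 2, b 3} : Set V) = N := by
  have : FiniteDimensional k V := .of_basis b
  have hNtop : N ≠ ⊤ := Submodule.Quotient.nontrivial_iff.1 (nontrivial_of_finrank_eq_succ hQ)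
  refine Submodule.eq_of_le_of_sup_span_singleton_eq_top ?_ hNtop (v := b 1) ?_
  · simp [Submodule.span_le, Set.insert_subset_iff, h0, h2, h3]
  · refine (Submodule.eq_top_iff_forall_basis_mem b).2 fun i => ?_
    fin_cases i
    · exact Submodule.mem_sup_left (Submodule.subset_span (by simp))
    · exact Submodule.mem_sup_right (Submodule.mem_span_singleton_self _)
    · exact Submodule.mem_sup_left (Submodule.subset_span (by simp))
    · exact Submodule.mem_sup_left (Submodule.subset_span (by simp))

theorem exists_span_eq_of_finrank_quotient_eq_one_of_notMem (hQ : finrank k (V ⧸ N) = 1)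
    (h0 : b 0 ∉ N) (h2 : b 2 ∈ N) (h3 : b 3 ∈ N) :
    ∃ α : k, Submodule.span k ({α • b 0 + b 1, b 2, b 3} : Set V) = N := by
  have : FiniteDimensional k V := .of_basis b
  have hNtop : N ≠ ⊤ := Submodule.Quotient.nontrivial_iff.1 (nontrivial_of_finrank_eq_succ hQ)
  obtain ⟨a, ha⟩ := N.exists_sub_smul_mem_of_finrank_quotient_eq_one hQ h0 (b 1)
  refine ⟨-a, Submodule.eq_of_le_of_sup_span_singleton_eq_top ?_ hNtop (v := b 0) ?_⟩
  · have hg : -(a • b 0) + b 1 ∈ N := by rwa [neg_add_eq_sub]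
    simp [Submodule.span_le, Set.insert_subset_iff, hg, h2, h3]
  · have hb1 : b 1 ∈ Submodule.span k {-a • b 0 + b 1, b 2, b 3} ⊔ k ∙ b 0 := by
      convert Submodule.add_mem _
        (Submodule.mem_sup_left (Submodule.subset_span (Set.mem_insert _ _)))
        (Submodule.mem_sup_right (Submodule.smul_mem _ a (Submodule.mem_span_singleton_self _)))
        using 1
      module
    refine (Submodule.eq_top_iff_forall_basis_mem b).2 fun i => ?_
    fin_cases i
    · exact Submodule.mem_sup_right (Submodule.mem_span_singleton_self _)
    · exact hb1
    · exact Submodule.mem_sup_left (Submodule.subset_span (by simp))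
    · exact Submodule.mem_sup_left (Submodule.subset_span (by simp))

end Module.Basis

theorem three_dim_ideals_general {k : Type*} [Field k] (h2 : (2 : k) ≠ 0)
    {L : Type*} [LieRing L] [LieAlgebra k L] (b : Module.Basis (Fin 4) k L)
    (hge : ⁅b 1, b 2⁆ = (2 : k) • b 2) (hgf : ⁅b 1, b 3⁆ = -((2 : k) • b 3))
    (N : Submodule k L) (hideal : ∀ x : L, ∀ y ∈ N, ⁅x, y⁆ ∈ N)
    (hdim : Module.finrank k N = 3) :
    N = Submodule.span k ({b 0, b 2, b 3} : Set L) ∨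
      ∃ α : k, N = Submodule.span k ({α • b 0 + b 1, b 2, b 3} : Set L) := by
  have : FiniteDimensional k L := .of_basis b
  have hQ : finrank k (L ⧸ N) = 1 := by
    have := N.finrank_quotient_add_finrank
    rw [finrank_eq_card_basis b, hdim, Fintype.card_fin] at this
    omega
  have hbracket := lie_mem_of_finrank_quotient_eq_one hideal hQ
  have he : b 2 ∈ N := mem_of_lie_eq_smul hbracket h2 hge
  have hf : b 3 ∈ N := mem_of_lie_eq_smul hbracket (neg_ne_zero.2 h2) (by rw [hgf, neg_smul])
  by_cases h0 : b 0 ∈ N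
  · exact .inl (b.span_eq_of_finrank_quotient_eq_one_of_mem hQ h0 he hf).symm
  · obtain ⟨α, hα⟩ := b.exists_span_eq_of_finrank_quotient_eq_one_of_notMem hQ h0 he hf
    exact .inr ⟨α, hα.symm⟩

/-- Any three-dimensional ideal of `H₄⁽⁻⁾` equals `span{1, e, f}` or
`span{α·1 + g, e, f}` for some `α`. -/
theorem three_dim_ideals {k : Type*} [Field k] (h2 : (2 : k) ≠ 0)
    {L : Type*} [LieRing L] [LieAlgebra k L] (b : Module.Basis (Fin 4) k L)
    (h1g : ⁅b 0, b 1⁆ = 0) (h1e : ⁅b 0, b 2⁆ = 0) (h1f : ⁅b 0, b 3⁆ = 0)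
    (hge : ⁅b 1, b 2⁆ = (2 : k) • b 2) (hgf : ⁅b 1, b 3⁆ = -((2 : k) • b 3))
    (hef : ⁅b 2, b 3⁆ = 0)
    (N : Submodule k L) (hideal : ∀ x : L, ∀ y ∈ N, ⁅x, y⁆ ∈ N)
    (hdim : Module.finrank k N = 3) :
    N = Submodule.span k ({b 0, b 2, b 3} : Set L) ∨
      ∃ α : k, N = Submodule.span k ({α • b 0 + b 1, b 2, b 3} : Set L) :=
  three_dim_ideals_general h2 b hge hgf N hideal hdim
end

section
/- Let H₄⁽⁻⁾ be the Lie algebra over a field k of characteristic ≠ 2 with basis 1, g, e, f and brackets [1,·] = 0, [g,e] = 2e, [g,f] = −2f, [e,f] = 0. Every three-dimensional non-abelian Lie subalgebra of H₄⁽⁻⁾ has one of the forms span(α·1 + g, e, f), span(1, g + γe, f), or span(1, g + γf, e) for some α, γ ∈ k. -/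
/-!
A three-dimensional subspace `N` of `H₄⁽⁻⁾` is the kernel of a nonzero functional `φ`, and
`ker φ` is spanned by the vectors `x - (φ x / φ y) • y` for any fixed `y` with `φ y ≠ 0`.
If `φ f ≠ 0`, bracketing `g - (φ g / φ f) • f` with the corresponding vectors for `1` and `e`
and applying `φ` gives `2 φ 1 = 0` and `4 φ e = 0`, which yields the third family; the case
`φ e ≠ 0` is symmetric. If `φ e = φ f = 0` then either `φ 1 ≠ 0`, giving the first family, or
`N = span(1, e, f)`, which is abelian.
-/

open Module Submodule

theorem Submodule.exists_dual_ne_zero_eq_ker {K V : Type*} [Field K] [AddCommGroup V]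
    [Module K V] [FiniteDimensional K V] (N : Submodule K V)
    (hN : finrank K N + 1 = finrank K V) :
    ∃ φ : Dual K V, φ ≠ 0 ∧ N = LinearMap.ker φ := by
  have hlt : N < ⊤ := by
    refine lt_top_iff_ne_top.2 fun h => ?_
    rw [h, finrank_top] at hN
    omega
  obtain ⟨φ, hφ, hle⟩ := N.exists_le_ker_of_lt_top hlt
  refine ⟨φ, hφ, eq_of_le_of_finrank_eq hle ?_⟩
  have := Dual.finrank_ker_add_one_of_ne_zero hφ
  omega

theorem Module.Dual.sub_div_smul_mem_ker {K V : Type*} [Field K] [AddCommGroup V] [Module K V]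
    (φ : Dual K V) (x : V) {y : V} (hy : φ y ≠ 0) : x - (φ x / φ y) • y ∈ LinearMap.ker φ := by
  simp [div_mul_cancel₀ _ hy]

theorem Module.Dual.ker_eq_span {ι K V : Type*} [Field K] [AddCommGroup V] [Module K V]
    (b : Basis ι K V) {φ : Dual K V} (i : ι) {s : Set V}
    (hs : s ⊆ LinearMap.ker φ) (hspan : ∀ j, b j - (φ (b j) / φ (b i)) • b i ∈ span K s) :
    LinearMap.ker φ = span K s := by
  refine le_antisymm (fun x hx => ?_) (span_le.2 hs)
  let P : V →ₗ[K] V := LinearMap.id - ((φ (b i))⁻¹ • φ).smulRight (b i)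
  have hPx : P x = x := by simp [P, LinearMap.mem_ker.1 hx]
  have hPb : ∀ j, P (b j) ∈ span K s := fun j => by
    simpa [P, div_eq_inv_mul] using hspan j
  have hrange : LinearMap.range P ≤ span K s := by
    rw [LinearMap.range_eq_map, ← b.span_eq, map_span, span_le, ← Set.range_comp]
    exact Set.range_subset_iff.2 hPb
  exact hPx ▸ hrange (LinearMap.mem_range_self P x)

theorem LieAlgebra.lie_eq_zero_of_mem_span {R L : Type*} [CommRing R] [LieRing L]
    [LieAlgebra R L] {s : Set L} (hs : ∀ x ∈ s, ∀ y ∈ s, ⁅x, y⁆ = 0) {x y : L}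
    (hx : x ∈ span R s) (hy : y ∈ span R s) : ⁅x, y⁆ = 0 := by
  induction hx, hy using span_induction₂ with
  | mem_mem x y hx hy => exact hs x hx y hy
  | zero_left y hy => simp
  | zero_right x hx => simp
  | add_left x y z _ _ _ hx hy => simp [hx, hy]
  | add_right x y z _ _ _ hx hy => simp [hx, hy]
  | smul_left r x y _ _ h => simp [h]
  | smul_right r x y _ _ h => simp [h]

theorem Module.Dual.exists_ker_eq_span_smul_add {K V : Type*} [Field K] [AddCommGroup V]
    [Module K V] (b : Basis (Fin 4) K V) {φ : Dual K V} (he : φ (b 2) = 0) (hf : φ (b 3) = 0)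
    (h1 : φ (b 0) ≠ 0) :
    ∃ α : K, LinearMap.ker φ = span K ({α • b 0 + b 1, b 2, b 3} : Set V) := by
  refine ⟨-(φ (b 1) / φ (b 0)), φ.ker_eq_span b 0 ?_ fun j => ?_⟩
  · simp [Set.insert_subset_iff, he, hf, div_mul_cancel₀ _ h1]
  · fin_cases j <;> simp [he, hf, h1, ← sub_eq_neg_add] <;> exact subset_span (by simp)

/-- `b` is the basis `1, g, e, f` of `H₄⁽⁻⁾`. -/
structure IsH4MinusBasis {k L : Type*} [CommRing k] [LieRing L] [LieAlgebra k L]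
    (b : Basis (Fin 4) k L) : Prop where
  one_g : ⁅b 0, b 1⁆ = 0
  one_e : ⁅b 0, b 2⁆ = 0
  one_f : ⁅b 0, b 3⁆ = 0
  g_e : ⁅b 1, b 2⁆ = (2 : k) • b 2
  g_f : ⁅b 1, b 3⁆ = -((2 : k) • b 3)
  e_f : ⁅b 2, b 3⁆ = 0

namespace IsH4MinusBasis

variable {k L : Type*} [Field k] [LieRing L] [LieAlgebra k L] {b : Basis (Fin 4) k L}
  (hb : IsH4MinusBasis b) {φ : Dual k L}
include hb

theorem g_one : ⁅b 1, b 0⁆ = 0 := by rw [← lie_skew, hb.one_g, neg_zero]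
theorem f_e : ⁅b 3, b 2⁆ = 0 := by rw [← lie_skew, hb.e_f, neg_zero]
theorem e_one : ⁅b 2, b 0⁆ = 0 := by rw [← lie_skew, hb.one_e, neg_zero]
theorem f_one : ⁅b 3, b 0⁆ = 0 := by rw [← lie_skew, hb.one_f, neg_zero]

theorem ker_eq_span_of_apply_f_ne_zero (h2 : (2 : k) ≠ 0)
    (hsub : ∀ x ∈ LinearMap.ker φ, ∀ y ∈ LinearMap.ker φ, ⁅x, y⁆ ∈ LinearMap.ker φ)
    (hf : φ (b 3) ≠ 0) :
    ∃ γ : k, LinearMap.ker φ = span k ({b 0, b 1 + γ • b 3, b 2} : Set L) := by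
  set v : Fin 4 → L := fun j => b j - (φ (b j) / φ (b 3)) • b 3 with hv
  have hv_mem : ∀ j, v j ∈ LinearMap.ker φ := fun j => φ.sub_div_smul_mem_ker (b j) hf
  have hlie_g_one : ⁅v 1, v 0⁆ = (2 * φ (b 0) / φ (b 3)) • b 3 := by
    simp only [hv, lie_sub, sub_lie, lie_smul, smul_lie, hb.g_one, hb.g_f, hb.f_one, lie_self]
    module
  have hlie_g_e : ⁅v 1, v 2⁆ = (2 : k) • b 2 + (2 * φ (b 2) / φ (b 3)) • b 3 := by
    simp only [hv, lie_sub, sub_lie, lie_smul, smul_lie, hb.g_e, hb.g_f, hb.f_e, lie_self]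
    module
  have ha : φ (b 0) = 0 := by
    have := hsub _ (hv_mem 1) _ (hv_mem 0)
    simpa [hlie_g_one, div_mul_cancel₀ _ hf, h2] using this
  have hc : φ (b 2) = 0 := by
    have := hsub _ (hv_mem 1) _ (hv_mem 2)
    simpa [hlie_g_e, div_mul_cancel₀ _ hf, h2, ← two_mul] using this
  refine ⟨-(φ (b 1) / φ (b 3)), φ.ker_eq_span b 3 ?_ fun j => ?_⟩
  · simp [Set.insert_subset_iff, ha, hc, div_mul_cancel₀ _ hf]
  · fin_cases j <;> simp [ha, hc, hf, ← sub_eq_add_neg] <;> exact subset_span (by simp)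

theorem ker_eq_span_of_apply_e_ne_zero (h2 : (2 : k) ≠ 0)
    (hsub : ∀ x ∈ LinearMap.ker φ, ∀ y ∈ LinearMap.ker φ, ⁅x, y⁆ ∈ LinearMap.ker φ)
    (he : φ (b 2) ≠ 0) :
    ∃ γ : k, LinearMap.ker φ = span k ({b 0, b 1 + γ • b 2, b 3} : Set L) := by
  set v : Fin 4 → L := fun j => b j - (φ (b j) / φ (b 2)) • b 2 with hv
  have hv_mem : ∀ j, v j ∈ LinearMap.ker φ := fun j => φ.sub_div_smul_mem_ker (b j) he
  have hlie_g_one : ⁅v 1, v 0⁆ = -((2 * φ (b 0) / φ (b 2)) • b 2) := by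
    simp only [hv, lie_sub, sub_lie, lie_smul, smul_lie, hb.g_one, hb.g_e, hb.e_one, lie_self]
    module
  have hlie_g_f : ⁅v 1, v 3⁆ = -((2 : k) • b 3 + (2 * φ (b 3) / φ (b 2)) • b 2) := by
    simp only [hv, lie_sub, sub_lie, lie_smul, smul_lie, hb.g_e, hb.g_f, hb.e_f, lie_self]
    module
  have ha : φ (b 0) = 0 := by
    have := hsub _ (hv_mem 1) _ (hv_mem 0)
    simpa [hlie_g_one, div_mul_cancel₀ _ he, h2] using this
  have hf : φ (b 3) = 0 := by
    have := hsub _ (hv_mem 1) _ (hv_mem 3)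
    simpa [hlie_g_f, div_mul_cancel₀ _ he, h2, ← two_mul] using this
  refine ⟨-(φ (b 1) / φ (b 2)), φ.ker_eq_span b 2 ?_ fun j => ?_⟩
  · simp [Set.insert_subset_iff, ha, hf, div_mul_cancel₀ _ he]
  · fin_cases j <;> simp [ha, hf, he, ← sub_eq_add_neg] <;> exact subset_span (by simp)

theorem lie_eq_zero_of_mem_ker (hφ : φ ≠ 0) (h1 : φ (b 0) = 0) (he : φ (b 2) = 0)
    (hf : φ (b 3) = 0) {x y : L} (hx : x ∈ LinearMap.ker φ) (hy : y ∈ LinearMap.ker φ) :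
    ⁅x, y⁆ = 0 := by
  have hg : φ (b 1) ≠ 0 := fun hg => hφ <| b.ext fun j => by fin_cases j <;> assumption
  have hker : LinearMap.ker φ = span k ({b 0, b 2, b 3} : Set L) := by
    refine φ.ker_eq_span b 1 ?_ fun j => ?_
    · simp [Set.insert_subset_iff, h1, he, hf]
    · fin_cases j <;> simp [h1, he, hf, hg] <;> exact subset_span (by simp)
  rw [hker] at hx hy
  refine LieAlgebra.lie_eq_zero_of_mem_span (fun u hu v hv => ?_) hx hy
  simp only [Set.mem_insert_iff, Set.mem_singleton_iff] at hu hv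
  rcases hu with rfl | rfl | rfl <;> rcases hv with rfl | rfl | rfl <;>
    simp [hb.one_e, hb.one_f, hb.e_one, hb.e_f, hb.f_one, hb.f_e]

end IsH4MinusBasis

/-- Every three-dimensional non-abelian Lie subalgebra of `H₄⁽⁻⁾` has one of the forms
`span{α·1 + g, e, f}`, `span{1, g + γe, f}`, or `span{1, g + γf, e}`. -/
theorem three_dim_nonabelian_subalgebras {k : Type*} [Field k] (h2 : (2 : k) ≠ 0)
    {L : Type*} [LieRing L] [LieAlgebra k L] (b : Module.Basis (Fin 4) k L)
    (h1g : ⁅b 0, b 1⁆ = 0) (h1e : ⁅b 0, b 2⁆ = 0) (h1f : ⁅b 0, b 3⁆ = 0)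
    (hge : ⁅b 1, b 2⁆ = (2 : k) • b 2) (hgf : ⁅b 1, b 3⁆ = -((2 : k) • b 3))
    (hef : ⁅b 2, b 3⁆ = 0)
    (N : Submodule k L) (hsub : ∀ x ∈ N, ∀ y ∈ N, ⁅x, y⁆ ∈ N)
    (hdim : Module.finrank k N = 3)
    (hnonab : ∃ x ∈ N, ∃ y ∈ N, ⁅x, y⁆ ≠ 0) :
    (∃ α : k, N = Submodule.span k ({α • b 0 + b 1, b 2, b 3} : Set L)) ∨
    (∃ γ : k, N = Submodule.span k ({b 0, b 1 + γ • b 2, b 3} : Set L)) ∨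
    (∃ γ : k, N = Submodule.span k ({b 0, b 1 + γ • b 3, b 2} : Set L)) := by
  have hb : IsH4MinusBasis b := ⟨h1g, h1e, h1f, hge, hgf, hef⟩
  have : FiniteDimensional k L := .of_basis b
  obtain ⟨φ, hφ, rfl⟩ := N.exists_dual_ne_zero_eq_ker (by simp [hdim, finrank_eq_card_basis b])
  obtain hf | hf := ne_or_eq (φ (b 3)) 0
  · exact .inr <| .inr <| hb.ker_eq_span_of_apply_f_ne_zero h2 hsub hf
  obtain he | he := ne_or_eq (φ (b 2)) 0
  · exact .inr <| .inl <| hb.ker_eq_span_of_apply_e_ne_zero h2 hsub he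
  obtain h1 | h1 := ne_or_eq (φ (b 0)) 0
  · exact .inl <| φ.exists_ker_eq_span_smul_add b he hf h1
  obtain ⟨x, hx, y, hy, hxy⟩ := hnonab
  exact absurd (hb.lie_eq_zero_of_mem_ker hφ h1 he hf hx hy) hxy
end

section
/- Let L be the three-dimensional Lie algebra with basis h, e, f and brackets [h,e] = 2e, [h,f] = −2f, [e,f] = 0, over a field k, and λ ∈ k. The linear operator R defined by R(h) = α₁h + β₁e + γ₁f, R(e) = −λe, R(f) = −λf (for any α₁, β₁, γ₁ ∈ k) is a Rota–Baxter operator of weight λ on L, i.e., [R(a), R(b)] = R([R(a), b] + [a, R(b)] + λ[a, b]) for all a, b ∈ L. -/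
/-!
The Rota–Baxter defect `D(a, c) = ⁅R a, R c⁆ - R (⁅R a, c⁆ + ⁅a, R c⁆ + λ⁅a, c⁆)` is bilinear,
antisymmetric and vanishes on the diagonal. It also vanishes as soon as one argument lies in a Lie
ideal `I` on which `R` acts as `-λ`: for `x ∈ I`, `⁅a, R x⁆ + λ⁅a, x⁆ = 0` and
`R ⁅R a, x⁆ = -λ⁅R a, x⁆`. With `I = span {e, f}` and `L = k h + I`, `D` vanishes on pairs from the
spanning set `{h} ∪ I`, hence everywhere.
-/

section

open Submodule

variable {R L : Type*} [CommRing R] [LieRing L] [LieAlgebra R L]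

def IsRotaBaxter (P : L →ₗ[R] L) (lam : R) : Prop :=
  ∀ a c : L, ⁅P a, P c⁆ = P (⁅P a, c⁆ + ⁅a, P c⁆ + lam • ⁅a, c⁆)

namespace IsRotaBaxter

def defect (P : L →ₗ[R] L) (lam : R) : L →ₗ[R] L →ₗ[R] L :=
  let B : L →ₗ[R] L →ₗ[R] L := LieModule.toEnd R L L
  B.compl₁₂ P P - (B.compl₁₂ P LinearMap.id + B.compl₂ P + lam • B).compr₂ P

variable {P : L →ₗ[R] L} {lam : R}

theorem defect_apply (a c : L) :
    defect P lam a c = ⁅P a, P c⁆ - P (⁅P a, c⁆ + ⁅a, P c⁆ + lam • ⁅a, c⁆) := by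
  simp [defect]

theorem defect_self (a : L) : defect P lam a a = 0 := by
  rw [defect_apply, ← lie_skew a, add_neg_cancel, lie_self, lie_self, smul_zero, add_zero,
    map_zero, sub_zero]

theorem defect_swap (a c : L) : defect P lam c a = -defect P lam a c := by
  rw [defect_apply, defect_apply, ← lie_skew (P a) (P c), ← lie_skew (P a) c, ← lie_skew a (P c),
    ← lie_skew a c, smul_neg, ← neg_add, ← neg_add, map_neg, add_comm ⁅P c, a⁆, neg_sub_neg,
    neg_sub]

variable {I : LieIdeal R L} (hP : ∀ x ∈ I, P x = -(lam • x))
include hP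

theorem defect_apply_of_mem (a : L) {x : L} (hx : x ∈ I) : defect P lam a x = 0 := by
  have hcancel : ⁅a, P x⁆ + lam • ⁅a, x⁆ = 0 := by rw [hP x hx, lie_neg, lie_smul, neg_add_cancel]
  rw [defect_apply, add_assoc, hcancel, add_zero, hP _ (I.lie_mem hx), hP x hx, lie_neg, lie_smul,
    sub_self]

theorem defect_of_mem_apply {x : L} (hx : x ∈ I) (a : L) : defect P lam x a = 0 := by
  rw [defect_swap, defect_apply_of_mem hP a hx, neg_zero]

theorem of_eq_neg_smul_on_lieIdeal {h : L} (hspan : span R (insert h (I : Set L)) = ⊤) :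
    IsRotaBaxter P lam := by
  suffices defect P lam = 0 from fun a c ↦ by
    simpa [defect_apply, sub_eq_zero] using LinearMap.congr_fun₂ this a c
  refine LinearMap.ext_on hspan fun a ha ↦ LinearMap.ext_on hspan fun c hc ↦ ?_
  obtain rfl | ha := ha
  · obtain rfl | hc := hc
    · exact defect_self _
    · exact defect_apply_of_mem hP a hc
  · exact defect_of_mem_apply hP ha c

end IsRotaBaxter

theorem lie_mem_span_of_forall_of_span_eq_top {S T : Set L} (hS : span R S = ⊤)
    (hST : ∀ y ∈ S, ∀ t ∈ T, ⁅y, t⁆ ∈ span R T) (x : L) {m : L} (hm : m ∈ span R T) :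
    ⁅x, m⁆ ∈ span R T := by
  have hx : x ∈ span R S := hS ▸ mem_top
  have hxm := apply_mem_map₂ (LieModule.toEnd R L L : L →ₗ[R] L →ₗ[R] L) hx hm
  rw [map₂_span_span] at hxm
  refine span_le.mpr ?_ hxm
  rintro _ ⟨y, hy, t, ht, rfl⟩
  exact hST y hy t ht

end

theorem RB_case_1_8_general {k : Type*} [Field k]
    {L : Type*} [LieRing L] [LieAlgebra k L] (b : Module.Basis (Fin 3) k L)
    (hhe : ⁅b 0, b 1⁆ = (2 : k) • b 1) (hhf : ⁅b 0, b 2⁆ = -((2 : k) • b 2))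
    (hef : ⁅b 1, b 2⁆ = 0)
    (lam : k) (R : L →ₗ[k] L)
    (hRe : R (b 1) = -(lam • b 1)) (hRf : R (b 2) = -(lam • b 2)) :
    ∀ a c : L, ⁅R a, R c⁆ = R (⁅R a, c⁆ + ⁅a, R c⁆ + lam • ⁅a, c⁆) := by
  have hideal : ∀ y ∈ Set.range b, ∀ t ∈ ({b 1, b 2} : Set L),
      ⁅y, t⁆ ∈ Submodule.span k {b 1, b 2} := by
    rintro _ ⟨i, rfl⟩ t ht
    have h1 : b 1 ∈ Submodule.span k {b 1, b 2} := Submodule.subset_span (by simp)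
    have h2 : b 2 ∈ Submodule.span k {b 1, b 2} := Submodule.subset_span (by simp)
    rcases ht with rfl | rfl <;> fin_cases i <;>
      simp [hhe, hhf, hef, ← lie_skew (b 2) (b 1), Submodule.smul_mem _ _, h1, h2]
  let I : LieIdeal k L :=
    { Submodule.span k {b 1, b 2} with
      lie_mem := lie_mem_span_of_forall_of_span_eq_top b.span_eq hideal _ }
  have hRI : ∀ x ∈ I, R x = -(lam • x) := fun x hx ↦
    LinearMap.eqOn_span (g := -(lam • LinearMap.id))
      (by rintro _ (rfl | rfl) <;> simp [hRe, hRf]) hx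
  refine IsRotaBaxter.of_eq_neg_smul_on_lieIdeal hRI (h := b 0) (eq_top_iff.mpr ?_)
  rw [← b.span_eq]
  refine Submodule.span_mono (Set.range_subset_iff.mpr fun i ↦ ?_)
  fin_cases i
  · exact Set.mem_insert _ _
  all_goals exact Set.mem_insert_of_mem _ (Submodule.subset_span (by simp))

/-- Case 1.8: `R(h) = α₁h + β₁e + γ₁f`, `R(e) = -λe`, `R(f) = -λf` is a Rota–Baxter
operator of weight `lam` on the Lie algebra with basis `h, e, f`, `[h,e] = 2e`,
`[h,f] = -2f`, `[e,f] = 0`. -/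
theorem RB_case_1_8 {k : Type*} [Field k]
    {L : Type*} [LieRing L] [LieAlgebra k L] (b : Module.Basis (Fin 3) k L)
    (hhe : ⁅b 0, b 1⁆ = (2 : k) • b 1) (hhf : ⁅b 0, b 2⁆ = -((2 : k) • b 2))
    (hef : ⁅b 1, b 2⁆ = 0)
    (lam α₁ β₁ γ₁ : k) (R : L →ₗ[k] L)
    (hRh : R (b 0) = α₁ • b 0 + β₁ • b 1 + γ₁ • b 2)
    (hRe : R (b 1) = -(lam • b 1)) (hRf : R (b 2) = -(lam • b 2)) :
    ∀ a c : L, ⁅R a, R c⁆ = R (⁅R a, c⁆ + ⁅a, R c⁆ + lam • ⁅a, c⁆) :=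
  RB_case_1_8_general b hhe hhf hef lam R hRe hRf
end

section
/- Let L be the three-dimensional Lie algebra with basis h, e, f and brackets [h,e] = 2e, [h,f] = −2f, [e,f] = 0, over a field k with char k ≠ 2, λ ∈ k. For any β₁, γ₁, β₃ ∈ k with β₃ ≠ 0, the linear operator R defined by R(h) = −(λ/2)h + β₁e + γ₁f, R(e) = −λe, R(f) = β₃e − λf is a Rota–Baxter operator of weight λ on L. -/
/-!
The Rota–Baxter defect `(a, c) ↦ ⁅R a, R c⁆ - R (⁅R a, c⁆ + ⁅a, R c⁆ + λ ⁅a, c⁆)` is bilinear and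
alternating, so it vanishes as soon as it vanishes on the pairs `(h, e)`, `(h, f)`, `(e, f)` of
basis vectors. Writing `λ = 2μ`, these three cases are direct computations with the brackets.
-/

namespace LieAlgebra

variable {k L : Type*} [CommRing k] [LieRing L] [LieAlgebra k L]

def rotaBaxterDefect (lam : k) (R : L →ₗ[k] L) : L →ₗ[k] L →ₗ[k] L :=
  LinearMap.mk₂ k (fun a c => ⁅R a, R c⁆ - R (⁅R a, c⁆ + ⁅a, R c⁆ + lam • ⁅a, c⁆))
    (fun a a' c => by simp only [map_add, add_lie, smul_add]; abel)
    (fun t a c => by simp only [map_add, map_smul, smul_lie]; module)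
    (fun a c c' => by simp only [map_add, lie_add, smul_add]; abel)
    (fun t a c => by simp only [map_add, map_smul, lie_smul]; module)

theorem rotaBaxterDefect_apply (lam : k) (R : L →ₗ[k] L) (a c : L) :
    rotaBaxterDefect lam R a c = ⁅R a, R c⁆ - R (⁅R a, c⁆ + ⁅a, R c⁆ + lam • ⁅a, c⁆) :=
  rfl

theorem rotaBaxterDefect_self (lam : k) (R : L →ₗ[k] L) (a : L) :
    rotaBaxterDefect lam R a a = 0 := by
  rw [rotaBaxterDefect_apply, ← lie_skew (R a) a, neg_add_cancel, lie_self, lie_self, smul_zero,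
    add_zero, map_zero, sub_zero]

theorem rotaBaxterDefect_swap (lam : k) (R : L →ₗ[k] L) (a c : L) :
    rotaBaxterDefect lam R c a = -rotaBaxterDefect lam R a c := by
  rw [rotaBaxterDefect_apply, rotaBaxterDefect_apply, ← lie_skew (R c) (R a), ← lie_skew (R c) a,
    ← lie_skew c (R a), ← lie_skew c a]
  simp only [smul_neg, map_add, map_neg]
  abel

theorem rotaBaxter_of_basis {ι : Type*} [LinearOrder ι] (lam : k) (R : L →ₗ[k] L)
    (b : Module.Basis ι k L) (hb : ∀ i j, i < j → rotaBaxterDefect lam R (b i) (b j) = 0) :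
    ∀ a c : L, ⁅R a, R c⁆ = R (⁅R a, c⁆ + ⁅a, R c⁆ + lam • ⁅a, c⁆) := by
  have hzero : rotaBaxterDefect lam R = 0 := by
    refine b.ext fun i => b.ext fun j => ?_
    rcases lt_trichotomy i j with hij | rfl | hji
    · exact hb i j hij
    · exact rotaBaxterDefect_self lam R (b i)
    · rw [rotaBaxterDefect_swap, hb j i hji, neg_zero]
      rfl
  intro a c
  rw [← sub_eq_zero, ← rotaBaxterDefect_apply, hzero]
  rfl

end LieAlgebra

open LieAlgebra in
theorem RB_case_1_9_general {k : Type*} [Field k] (h2 : (2 : k) ≠ 0)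
    {L : Type*} [LieRing L] [LieAlgebra k L] (b : Module.Basis (Fin 3) k L)
    (hhe : ⁅b 0, b 1⁆ = (2 : k) • b 1) (hhf : ⁅b 0, b 2⁆ = -((2 : k) • b 2))
    (hef : ⁅b 1, b 2⁆ = 0)
    (lam β₁ γ₁ β₃ : k) (R : L →ₗ[k] L)
    (hRh : R (b 0) = -((lam / 2) • b 0) + β₁ • b 1 + γ₁ • b 2)
    (hRe : R (b 1) = -(lam • b 1))
    (hRf : R (b 2) = β₃ • b 1 - lam • b 2) :
    ∀ a c : L, ⁅R a, R c⁆ = R (⁅R a, c⁆ + ⁅a, R c⁆ + lam • ⁅a, c⁆) := by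
  obtain ⟨μ, rfl⟩ : ∃ μ, lam = 2 * μ := ⟨lam / 2, (mul_div_cancel₀ lam h2).symm⟩
  rw [mul_div_cancel_left₀ _ h2] at hRh
  have heh : ⁅b 1, b 0⁆ = -((2 : k) • b 1) := by rw [← lie_skew, hhe]
  have hfh : ⁅b 2, b 0⁆ = (2 : k) • b 2 := by rw [← lie_skew, hhf, neg_neg]
  have hfe : ⁅b 2, b 1⁆ = 0 := by rw [← lie_skew, hef, neg_zero]
  refine rotaBaxter_of_basis _ R b fun i j hij => ?_
  rw [rotaBaxterDefect_apply, sub_eq_zero]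
  fin_cases i <;> fin_cases j <;> simp only [Fin.lt_def] at hij <;> (try omega) <;>
    simp only [Fin.zero_eta, Fin.mk_one, Fin.reduceFinMk, hRh, hRe, hRf,
      lie_add, add_lie, lie_sub, sub_lie, lie_smul, smul_lie, lie_neg, neg_lie,
      hhe, hhf, hef, heh, hfh, hfe, lie_self, map_add, map_sub, map_neg, map_smul,
      map_zero, smul_zero, neg_zero, smul_neg, smul_add, smul_sub, smul_smul] <;>
    module

/-- Case 1.9: `R(h) = -(λ/2)h + β₁e + γ₁f`, `R(e) = -λe`, `R(f) = β₃e - λf` with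
`β₃ ≠ 0` is a Rota–Baxter operator of weight `lam`. -/
theorem RB_case_1_9 {k : Type*} [Field k] (h2 : (2 : k) ≠ 0)
    {L : Type*} [LieRing L] [LieAlgebra k L] (b : Module.Basis (Fin 3) k L)
    (hhe : ⁅b 0, b 1⁆ = (2 : k) • b 1) (hhf : ⁅b 0, b 2⁆ = -((2 : k) • b 2))
    (hef : ⁅b 1, b 2⁆ = 0)
    (lam β₁ γ₁ β₃ : k) (hβ₃ : β₃ ≠ 0) (R : L →ₗ[k] L)
    (hRh : R (b 0) = -((lam / 2) • b 0) + β₁ • b 1 + γ₁ • b 2)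
    (hRe : R (b 1) = -(lam • b 1))
    (hRf : R (b 2) = β₃ • b 1 - lam • b 2) :
    ∀ a c : L, ⁅R a, R c⁆ = R (⁅R a, c⁆ + ⁅a, R c⁆ + lam • ⁅a, c⁆) :=
  RB_case_1_9_general h2 b hhe hhf hef lam β₁ γ₁ β₃ R hRh hRe hRf
end
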